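/- For nonnegative integer n, the formal power series F(n,x) = Σ_{k≥0} u_{n+1}^T A_{n+1}^k v_{n+1,1} x^k equals the rational function P_n(−x)/P_{n+1}(x); that is, P_{n+1}(x)·F(n,x) = P_n(−x) as formal power series, where A_{n+1} is the (n+1)×(n+1) unit-primitive matrix and P_m(x) = Σ_{k=0}^{m} (−1)^{⌊3k/2⌋} C(⌊(m+k)/2⌋,k) x^k. -/

import Mathlib

/-!
The vector `w = ∑ₖ Aᵏ v xᵏ` is the unique power-series solution of `w = v + x A w`: the difference
`D` of two solutions satisfies `D = x A D`, so it is divisible by every power of `x`. For the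
staircase matrix `A_m`, `(A_m w)_i = w_0 + ⋯ + w_{m-1-i}`, so in terms of the partial sums
`s_t = w_0 + ⋯ + w_{t-1}` the system reads `s_{i+1} - s_i = [i = 0] + x s_{m-i}`. It is solved by
`P_m s_t = P(m - 2t)` for `t ≥ 1`, where `P(-k-1) = P_k(-x)`: the system then becomes the
three-term recurrence `P(k) = P(k+2) + x P(-k-2)`, which on coefficients is Pascal's rule.
Hence `P_m F = P_m s_m = P(-m) = P_{m-1}(-x)`.
-/

open Matrix Polynomial

/-- The `m × m` unit-primitive matrix: entry `(i,j)` (1-based) is 1 iff `i + j ≤ m + 1`. -/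
def A (m : ℕ) : Matrix (Fin m) (Fin m) ℝ :=
  Matrix.of fun i j => if (i : ℕ) + (j : ℕ) + 1 ≤ m then 1 else 0

/-- The all-ones vector `u_m`. -/
def uvec (m : ℕ) : Fin m → ℝ := fun _ => 1

/-- The first standard basis vector `v_{m,1}`. -/
def v1 (m : ℕ) : Fin m → ℝ := fun i => if (i : ℕ) = 0 then 1 else 0

/-- The polynomial `P_m(x) = ∑_{k=0}^{m} (−1)^{⌊3k/2⌋} C(⌊(m+k)/2⌋,k) x^k`. -/
noncomputable def Ppoly (m : ℕ) : Polynomial ℝ :=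
  ∑ k ∈ Finset.range (m + 1),
    Polynomial.C ((-1 : ℝ) ^ (3 * k / 2) * (Nat.choose ((m + k) / 2) k : ℝ)) * Polynomial.X ^ k

/-- The formal power series `F(n,x) = ∑_{k≥0} (u_{n+1}^T A_{n+1}^k v_{n+1,1}) x^k`. -/
noncomputable def F (n : ℕ) : PowerSeries ℝ :=
  PowerSeries.mk fun k => uvec (n + 1) ⬝ᵥ ((A (n + 1)) ^ k).mulVec (v1 (n + 1))

section OrbitSeries

open scoped PowerSeries

variable {R ι : Type*} [Fintype ι]

theorem eq_zero_of_eq_X_smul_mulVec [CommSemiring R] (M : Matrix ι ι R⟦X⟧) (D : ι → R⟦X⟧)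
    (h : D = (PowerSeries.X : R⟦X⟧) • (M *ᵥ D)) : D = 0 := by
  have hdvd : ∀ k i, (PowerSeries.X : R⟦X⟧) ^ k ∣ D i := by
    intro k
    induction k with
    | zero => simp
    | succ k ih =>
      intro i
      rw [h, Pi.smul_apply, smul_eq_mul, pow_succ']
      exact mul_dvd_mul_left _ (Finset.dvd_sum fun j _ => dvd_mul_of_dvd_right (ih j) _)
  ext i k
  exact PowerSeries.X_pow_dvd_iff.mp (hdvd (k + 1) i) k k.lt_succ_self

variable [DecidableEq ι]

noncomputable def orbitSeries [Semiring R] (A : Matrix ι ι R) (v : ι → R) (i : ι) : R⟦X⟧ :=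
  PowerSeries.mk fun k => (A ^ k *ᵥ v) i

theorem orbitSeries_eq [Semiring R] (A : Matrix ι ι R) (v : ι → R) :
    orbitSeries A v =
      PowerSeries.C ∘ v + (PowerSeries.X : R⟦X⟧) • (A.map PowerSeries.C *ᵥ orbitSeries A v) := by
  ext i (_ | k)
  · simp [orbitSeries]
  · simp only [orbitSeries, PowerSeries.coeff_mk, pow_succ', ← Matrix.mulVec_mulVec]
    simp [Matrix.mulVec, dotProduct, PowerSeries.coeff_succ_X_mul, map_sum, orbitSeries]

theorem smul_orbitSeries_eq [CommRing R] (A : Matrix ι ι R) (v : ι → R) (p : R⟦X⟧)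
    (q : ι → R⟦X⟧)
    (hq : q = p • (PowerSeries.C ∘ v) + (PowerSeries.X : R⟦X⟧) • (A.map PowerSeries.C *ᵥ q)) :
    p • orbitSeries A v = q := by
  rw [← sub_eq_zero]
  apply eq_zero_of_eq_X_smul_mulVec (A.map PowerSeries.C)
  rw [Matrix.mulVec_sub, Matrix.mulVec_smul]
  have hw := eq_sub_of_add_eq' (orbitSeries_eq A v).symm
  have hq' := eq_sub_of_add_eq' hq.symm
  rw [smul_sub, smul_comm _ p, hw, hq', smul_sub]
  abel

end OrbitSeries

theorem coeff_Ppoly (m k : ℕ) :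
    (Ppoly m).coeff k = (-1) ^ (3 * k / 2) * ((m + k) / 2).choose k := by
  rw [Ppoly, finsetSum_coeff]
  simp only [coeff_C_mul_X_pow, Finset.sum_ite_eq, Finset.mem_range]
  split_ifs with hk
  · rfl
  · rw [Nat.choose_eq_zero_of_lt (by omega), Nat.cast_zero, mul_zero]

theorem coeff_comp_neg_X {R : Type*} [CommRing R] (p : R[X]) (k : ℕ) :
    (p.comp (-X)).coeff k = (-1) ^ k * p.coeff k := by
  induction p using Polynomial.induction_on' with
  | add p q hp hq => simp [hp, hq, mul_add]
  | monomial j a =>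
    rw [monomial_comp, neg_pow, ← C_1, ← C_neg, ← C_pow, mul_left_comm, ← mul_assoc, ← C_mul,
      coeff_C_mul_X_pow, coeff_monomial]
    split_ifs <;> simp_all [mul_comm]

theorem Ppoly_add_two (k : ℕ) : Ppoly (k + 2) = Ppoly k - X * (Ppoly (k + 1)).comp (-X) := by
  ext (_ | j)
  · simp [coeff_Ppoly]
  · rw [coeff_sub, coeff_X_mul, coeff_comp_neg_X, coeff_Ppoly, coeff_Ppoly, coeff_Ppoly,
      show (k + 2 + (j + 1)) / 2 = (k + j + 1) / 2 + 1 by omega,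
      show (k + (j + 1)) / 2 = (k + j + 1) / 2 by omega,
      show (k + 1 + j) / 2 = (k + j + 1) / 2 by omega, Nat.choose_succ_succ', Nat.cast_add]
    have hsign : (-1 : ℝ) ^ (3 * (j + 1) / 2) = (-1) ^ (j + 1) * (-1) ^ (3 * j / 2) := by
      rw [← pow_add, neg_one_pow_eq_pow_mod_two, neg_one_pow_eq_pow_mod_two (j + 1 + _)]
      congr 1
      rcases Nat.even_or_odd' j with ⟨i, rfl | rfl⟩ <;> omega
    rw [hsign]
    ring

theorem Ppoly_zero : Ppoly 0 = 1 := by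
  simp [Ppoly]

theorem Ppoly_one : Ppoly 1 = 1 - X := by
  simp [Ppoly, Finset.sum_range_succ]
  ring

/-- `P` extended to negative indices by `P_{-k-1}(x) = P_k(-x)`; with this convention the
recurrence `Pint_eq_add_two_add_X_mul` holds at every integer. -/
noncomputable def Pint : ℤ → ℝ[X]
  | .ofNat k => Ppoly k
  | .negSucc k => (Ppoly k).comp (-X)

theorem Pint_natCast (k : ℕ) : Pint k = Ppoly k := rfl

theorem Pint_neg_natCast_sub_one (k : ℕ) : Pint (-k - 1) = (Ppoly k).comp (-X) := by
  rw [show -(k : ℤ) - 1 = Int.negSucc k by rw [Int.negSucc_eq]; ring]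
  rfl

theorem Pint_eq_add_two_add_X_mul (k : ℤ) : Pint k = Pint (k + 2) + X * Pint (-k - 2) := by
  obtain ⟨j, rfl | rfl⟩ : ∃ j : ℕ, k = j ∨ k = -j - 1 := by
    rcases k with j | j
    exacts [⟨j, .inl rfl⟩, ⟨j, .inr (by rw [Int.negSucc_eq]; ring)⟩]
  · rw [show (j : ℤ) + 2 = (j + 2 : ℕ) by push_cast; ring,
      show -(j : ℤ) - 2 = -(j + 1 : ℕ) - 1 by push_cast; ring]
    simp only [Pint_natCast, Pint_neg_natCast_sub_one, Ppoly_add_two]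
    ring
  · match j with
    | 0 =>
      rw [show -((0 : ℕ) : ℤ) - 1 + 2 = (1 : ℕ) by norm_num,
        show -(-((0 : ℕ) : ℤ) - 1) - 2 = -(0 : ℕ) - 1 by norm_num]
      simp only [Pint_natCast, Pint_neg_natCast_sub_one, Ppoly_zero, Ppoly_one, one_comp]
      ring
    | 1 =>
      rw [show -((1 : ℕ) : ℤ) - 1 + 2 = (0 : ℕ) by norm_num,
        show -(-((1 : ℕ) : ℤ) - 1) - 2 = (0 : ℕ) by norm_num]
      simp only [Pint_natCast, Pint_neg_natCast_sub_one, Ppoly_zero, Ppoly_one, sub_comp,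
        one_comp, X_comp]
      ring
    | j + 2 =>
      rw [show -((j + 2 : ℕ) : ℤ) - 1 + 2 = -(j : ℕ) - 1 by push_cast; ring,
        show -(-((j + 2 : ℕ) : ℤ) - 1) - 2 = (j + 1 : ℕ) by push_cast; ring]
      simp only [Pint_natCast, Pint_neg_natCast_sub_one, Ppoly_add_two, sub_comp, mul_comp,
        X_comp, comp_neg_X_comp_neg_X]
      ring

noncomputable def partialSumPoly (m t : ℕ) : ℝ[X] :=
  if t = 0 then 0 else Pint ((m : ℤ) - 2 * t)

theorem partialSumPoly_zero (m : ℕ) : partialSumPoly m 0 = 0 := if_pos rfl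

theorem partialSumPoly_succ_sub (m i : ℕ) (hi : i < m) :
    partialSumPoly m (i + 1) - partialSumPoly m i =
      (if i = 0 then Ppoly m else 0) + X * partialSumPoly m (m - i) := by
  simp only [partialSumPoly, if_neg i.succ_ne_zero, if_neg (show m - i ≠ 0 by omega),
    Nat.cast_sub hi.le]
  have h := Pint_eq_add_two_add_X_mul ((m : ℤ) - 2 * (i + 1 : ℕ))
  rw [show -((m : ℤ) - 2 * (i + 1 : ℕ)) - 2 = m - 2 * (m - i) by push_cast; ring] at h
  split_ifs with hi0
  · subst hi0
    rw [show (m : ℤ) - 2 * (0 + 1 : ℕ) + 2 = m by push_cast; ring, Pint_natCast] at h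
    rw [h]
    ring
  · rw [show (m : ℤ) - 2 * (i + 1 : ℕ) + 2 = m - 2 * i by push_cast; ring] at h
    rw [h]
    ring

theorem partialSumPoly_self (n : ℕ) : partialSumPoly (n + 1) (n + 1) = (Ppoly n).comp (-X) := by
  rw [partialSumPoly, if_neg n.succ_ne_zero, ← Pint_neg_natCast_sub_one]
  push_cast
  congr 1
  ring

theorem mulVec_map_A_apply {S : Type*} [Semiring S] (f : ℝ →+* S) (m : ℕ) (g : ℕ → S)
    (i : Fin m) : ((A m).map f *ᵥ fun j => g j) i = ∑ j ∈ Finset.range (m - i), g j := by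
  simp only [Matrix.mulVec, dotProduct, A, Matrix.map_apply, Matrix.of_apply, apply_ite f,
    map_one, map_zero, ite_mul, one_mul, zero_mul]
  rw [Fin.sum_univ_eq_sum_range (fun j => if (i : ℕ) + j + 1 ≤ m then g j else 0),
    ← Finset.sum_filter]
  congr 1
  ext j
  simp only [Finset.mem_filter, Finset.mem_range]
  omega

/-- For every `n ≥ 0`: `P_{n+1}(x) · F(n,x) = P_n(−x)` as formal power series,
i.e. `F(n,x) = P_n(−x)/P_{n+1}(x)`. -/
theorem F_eq_P_ratio (n : ℕ) :
    (Ppoly (n + 1) : PowerSeries ℝ) * F n = ((Ppoly n).comp (-Polynomial.X) : PowerSeries ℝ) := by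
  set S : ℕ → PowerSeries ℝ := fun t => (partialSumPoly (n + 1) t : PowerSeries ℝ)
  have hsol : (Ppoly (n + 1) : PowerSeries ℝ) • orbitSeries (A (n + 1)) (v1 (n + 1)) =
      fun i : Fin (n + 1) => S (i + 1) - S i := by
    apply smul_orbitSeries_eq
    funext i
    have hrow := mulVec_map_A_apply PowerSeries.C (n + 1) (fun t => S (t + 1) - S t) i
    simp only [Finset.sum_range_sub] at hrow
    simp only [Pi.add_apply, Pi.smul_apply, smul_eq_mul, Function.comp_apply, hrow]
    simp only [S, v1, partialSumPoly_zero, ← Polynomial.coe_sub, partialSumPoly_succ_sub _ _ i.2]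
    split_ifs <;> simp
  have hF : F n = ∑ i, orbitSeries (A (n + 1)) (v1 (n + 1)) i := by
    ext k
    simp [F, orbitSeries, uvec, dotProduct, map_sum]
  calc (Ppoly (n + 1) : PowerSeries ℝ) * F n = ∑ i : Fin (n + 1), (S (i + 1) - S i) := by
        rw [hF, Finset.mul_sum]
        exact Finset.sum_congr rfl fun i _ => congr_fun hsol i
    _ = S (n + 1) := by
        rw [Fin.sum_univ_eq_sum_range (fun i => S (i + 1) - S i), Finset.sum_range_sub]
        simp [S, partialSumPoly_zero]
    _ = _ := by simp only [S, partialSumPoly_self]
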